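/- arXiv:1709.03462 — 2 statements merged into one kernel-verified Lean document; each statement's English description precedes it below -/
import Mathlib

section
/- Let 1 < p < ∞ and q with 1/p + 1/q = 1, let N ≥ 1, 𝒩 = {1,...,N}, and suppose h : ℝ^𝒩 → ℝ is the pointwise limit of the functions x ↦ ‖x − y^n‖_p − ‖y^n‖_p for some sequence (y^n) in ℝ^𝒩 with ‖y^n‖_p → ∞. Then there exists μ ∈ ℝ^𝒩 with ‖μ‖_q = 1 such that h(x) = −Σ_{i∈𝒩} μ_i x_i for all x ∈ ℝ^𝒩. -/
/-! After passing to a subsequence, the directions `wₙ = yⁿ / ‖yⁿ‖_p` converge to a unit vector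
`w`. By homogeneity, `‖x - yⁿ‖_p - ‖yⁿ‖_p = tₙ (‖wₙ - x / tₙ‖_p - ‖wₙ‖_p)` with `tₙ = ‖yⁿ‖_p → ∞`,
and since the ℓ^p norm is C¹, hence strictly differentiable, at `w ≠ 0`, this tends to
`-D‖·‖_p(w) x`. The gradient is `μᵢ = |wᵢ|^(p-2) wᵢ`, and `‖μ‖_q^q = ‖w‖_p^p = 1` because
`(p - 1) q = p`. -/

open Filter Topology
open scoped ENNReal

theorem Real.HolderConjugate.abs_abs_rpow_sub_two_mul_self_rpow {p q : ℝ}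
    (hpq : p.HolderConjugate q) (a : ℝ) : |(|a| ^ (p - 2) * a)| ^ q = |a| ^ p := by
  rcases eq_or_ne a 0 with rfl | ha
  · simp [Real.zero_rpow hpq.ne_zero, Real.zero_rpow hpq.symm.ne_zero]
  have hsub : |a| ^ (p - 2) * |a| = |a| ^ (p - 1) := by
    rw [← Real.rpow_add_one (abs_ne_zero.2 ha)]; ring_nf
  rw [abs_mul, abs_of_nonneg (by positivity), hsub, ← Real.rpow_mul (abs_nonneg a),
    hpq.sub_one_mul_conj]

theorem hasStrictDerivAt_abs_rpow (x : ℝ) {p : ℝ} (hp : 1 < p) :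
    HasStrictDerivAt (fun x : ℝ ↦ |x| ^ p) (p * |x| ^ (p - 2) * x) x := by
  have hC : ContDiff ℝ 1 (fun x : ℝ ↦ |x| ^ p) := by
    simpa only [Real.norm_eq_abs] using contDiff_norm_rpow (E := ℝ) hp
  exact hC.contDiffAt.hasStrictDerivAt' (hasDerivAt_abs_rpow x hp) one_ne_zero

section NormedSpace

variable {E : Type*} [NormedAddCommGroup E] [NormedSpace ℝ E] {α : Type*} {l : Filter α}

theorem HasStrictFDerivAt.tendsto_mul_sub {F : E → ℝ} {L : E →L[ℝ] ℝ} {w : E}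
    (hF : HasStrictFDerivAt F L w) {v : α → E} (hv : Tendsto v l (𝓝 w)) {t : α → ℝ}
    (ht : Tendsto t l atTop) (x : E) :
    Tendsto (fun n ↦ t n * (F (v n - (t n)⁻¹ • x) - F (v n))) l (𝓝 (-L x)) := by
  have hs : Tendsto (fun n ↦ (t n)⁻¹) l (𝓝 0) := ht.inv_tendsto_atTop
  have hb : Tendsto (fun n ↦ v n - (t n)⁻¹ • x) l (𝓝 w) := by
    simpa using hv.sub (hs.smul_const x)
  have hstep : (fun n ↦ v n - (t n)⁻¹ • x - v n) =O[l] fun n ↦ (t n)⁻¹ :=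
    Asymptotics.isBigO_of_le' (c := ‖x‖) l fun n ↦ by simp [norm_smul, mul_comm]
  have hlo : (fun n ↦ F (v n - (t n)⁻¹ • x) - F (v n) + (t n)⁻¹ * L x) =o[l]
      fun n ↦ (t n)⁻¹ := by
    refine ((hF.isLittleO.comp_tendsto (hb.prodMk_nhds hv)).trans_isBigO hstep).congr_left
      fun n ↦ ?_
    simp only [Function.comp_apply, map_sub, map_smul, smul_eq_mul]
    ring
  have hlim := hlo.tendsto_div_nhds_zero.sub_const (L x)
  rw [zero_sub] at hlim
  refine hlim.congr' ?_
  filter_upwards [ht.eventually_gt_atTop 0] with n hn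
  field_simp
  ring

theorem tendsto_norm_sub_sub_norm_of_tendsto_direction {L : E →L[ℝ] ℝ} {w : E}
    (hL : HasStrictFDerivAt (‖·‖) L w) {y : α → E} (hy : Tendsto (‖y ·‖) l atTop)
    (hdir : Tendsto (fun n ↦ ‖y n‖⁻¹ • y n) l (𝓝 w)) (x : E) :
    Tendsto (fun n ↦ ‖x - y n‖ - ‖y n‖) l (𝓝 (-L x)) := by
  refine (hL.tendsto_mul_sub hdir hy x).congr' ?_
  filter_upwards [hy.eventually_gt_atTop 0] with n hn
  rw [← smul_sub, norm_smul, norm_smul, Real.norm_of_nonneg (inv_nonneg.2 hn.le),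
    norm_sub_rev]
  field_simp

theorem exists_subseq_tendsto_direction [ProperSpace E] {y : ℕ → E}
    (hy : Tendsto (‖y ·‖) atTop atTop) :
    ∃ w : E, ‖w‖ = 1 ∧ ∃ φ : ℕ → ℕ, StrictMono φ ∧
      Tendsto (fun k ↦ ‖y (φ k)‖⁻¹ • y (φ k)) atTop (𝓝 w) := by
  have hunit : ∀ n, y n ≠ 0 → ‖‖y n‖⁻¹ • y n‖ = 1 := fun n hn ↦ norm_smul_inv_norm hn
  have hball : ∀ n, ‖y n‖⁻¹ • y n ∈ Metric.closedBall (0 : E) 1 := fun n ↦ by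
    rcases eq_or_ne (y n) 0 with hn | hn
    · simp [hn]
    · simp [hunit n hn]
  obtain ⟨w, -, φ, hφ, hw⟩ := (isCompact_closedBall (0 : E) 1).tendsto_subseq hball
  refine ⟨w, tendsto_nhds_unique hw.norm (tendsto_const_nhds.congr' ?_), φ, hφ, hw⟩
  filter_upwards [(hy.comp hφ.tendsto_atTop).eventually_gt_atTop 0] with k hk
  exact (hunit _ (norm_pos_iff.1 hk)).symm

end NormedSpace

namespace PiLp

variable {ι : Type*} [Fintype ι] {p : ℝ≥0∞}

theorem norm_eq_sum_abs_rpow (hp : 0 < p.toReal) (v : PiLp p (fun _ : ι ↦ ℝ)) :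
    ‖v‖ = (∑ i, |v i| ^ p.toReal) ^ (1 / p.toReal) := by
  simp only [PiLp.norm_eq_sum hp, Real.norm_eq_abs]

theorem sum_abs_rpow_eq_one_of_norm_eq_one (hp : 0 < p.toReal)
    {w : PiLp p (fun _ : ι ↦ ℝ)} (hw : ‖w‖ = 1) : ∑ i, |w i| ^ p.toReal = 1 := by
  rw [← Real.rpow_left_inj (by positivity) zero_le_one (one_div_ne_zero hp.ne'),
    ← norm_eq_sum_abs_rpow hp, hw, Real.one_rpow]

theorem hasStrictFDerivAt_norm [Fact (1 ≤ p)] (hp : 1 < p) (hp' : p ≠ ∞)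
    {w : PiLp p (fun _ : ι ↦ ℝ)} (hw : ‖w‖ = 1) :
    HasStrictFDerivAt (fun v : PiLp p (fun _ : ι ↦ ℝ) ↦ ‖v‖)
      (∑ i, (|w i| ^ (p.toReal - 2) * w i) • proj (𝕜 := ℝ) p (fun _ ↦ ℝ) i) w := by
  have hr : 1 < p.toReal := by
    simpa using (ENNReal.toReal_lt_toReal ENNReal.one_ne_top hp').2 hp
  have hsum := sum_abs_rpow_eq_one_of_norm_eq_one (by positivity) hw
  have hinner : HasStrictFDerivAt (fun v : PiLp p (fun _ : ι ↦ ℝ) ↦ ∑ i, |v i| ^ p.toReal)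
      (∑ i, (p.toReal * |w i| ^ (p.toReal - 2) * w i) • proj (𝕜 := ℝ) p (fun _ ↦ ℝ) i) w :=
    HasStrictFDerivAt.fun_sum fun i _ ↦ by
      exact (hasStrictDerivAt_abs_rpow (w i) hr).comp_hasStrictFDerivAt w
        (proj (𝕜 := ℝ) p (fun _ ↦ ℝ) i).hasStrictFDerivAt
  have houter := (Real.hasStrictDerivAt_rpow_const_of_ne (hsum.symm ▸ one_ne_zero)
    (1 / p.toReal)).comp_hasStrictFDerivAt w hinner
  rw [funext (norm_eq_sum_abs_rpow (by positivity))]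
  refine houter.congr_fderiv ?_
  ext v
  simp only [hsum, Real.one_rpow, mul_one, _root_.smul_apply, FunLike.coe_sum, Finset.sum_apply,
    proj_apply, smul_eq_mul, Finset.mul_sum]
  exact Finset.sum_congr rfl fun i _ ↦ by field_simp

end PiLp

theorem lp_horofunction_form_general (p q : ℝ) (hp : 1 < p) (hpq : 1/p + 1/q = 1)
    (N : ℕ) (h : (Fin N → ℝ) → ℝ) (y : ℕ → Fin N → ℝ)
    (hy : Tendsto (fun n => (∑ i, |y n i| ^ p) ^ (1/p)) atTop atTop)
    (hlim : ∀ x : Fin N → ℝ,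
      Tendsto (fun n =>
          (∑ i, |x i - y n i| ^ p) ^ (1/p) - (∑ i, |y n i| ^ p) ^ (1/p))
        atTop (𝓝 (h x))) :
    ∃ μ : Fin N → ℝ, (∑ i, |μ i| ^ q) ^ (1/q) = 1 ∧
      ∀ x : Fin N → ℝ, h x = -∑ i, μ i * x i := by
  have hconj : p.HolderConjugate q :=
    Real.holderConjugate_iff.2 ⟨hp, by simpa only [one_div] using hpq⟩
  set P := ENNReal.ofReal p
  have hP : P.toReal = p := ENNReal.toReal_ofReal (by linarith)
  have : Fact (1 ≤ P) := ⟨ENNReal.one_le_ofReal.2 hp.le⟩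
  have hnorm (v : Fin N → ℝ) : ‖WithLp.toLp P v‖ = (∑ i, |v i| ^ p) ^ (1/p) := by
    rw [PiLp.norm_eq_sum_abs_rpow (by linarith), hP]
  have hY : Tendsto (fun n ↦ ‖WithLp.toLp P (y n)‖) atTop atTop := by simpa only [hnorm]
  obtain ⟨w, hw, φ, hφ, hdir⟩ := exists_subseq_tendsto_direction hY
  have hderiv := PiLp.hasStrictFDerivAt_norm (p := P) (ENNReal.one_lt_ofReal.2 hp)
    ENNReal.ofReal_ne_top hw
  refine ⟨fun i ↦ |w i| ^ (p - 2) * w i, ?_, fun x ↦ ?_⟩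
  · simp_rw [hconj.abs_abs_rpow_sub_two_mul_self_rpow, ← hP,
      PiLp.sum_abs_rpow_eq_one_of_norm_eq_one (by linarith) hw, Real.one_rpow]
  · refine tendsto_nhds_unique ((hlim x).comp hφ.tendsto_atTop) ?_
    convert tendsto_norm_sub_sub_norm_of_tendsto_direction hderiv
      (hY.comp hφ.tendsto_atTop) hdir (WithLp.toLp P x) using 1
    · ext k; simp only [Function.comp_apply, ← WithLp.toLp_sub, hnorm]; rfl
    · simp [hP]

/-- every pointwise limit of `τ_p(yⁿ)` with `‖yⁿ‖_p → ∞` is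
`x ↦ -∑ μ_i x_i` with `‖μ‖_q = 1`. -/
theorem lp_horofunction_form (p q : ℝ) (hp : 1 < p) (hpq : 1/p + 1/q = 1)
    (N : ℕ) (hN : 1 ≤ N) (h : (Fin N → ℝ) → ℝ) (y : ℕ → Fin N → ℝ)
    (hy : Tendsto (fun n => (∑ i, |y n i| ^ p) ^ (1/p)) atTop atTop)
    (hlim : ∀ x : Fin N → ℝ,
      Tendsto (fun n =>
          (∑ i, |x i - y n i| ^ p) ^ (1/p) - (∑ i, |y n i| ^ p) ^ (1/p))
        atTop (𝓝 (h x))) :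
    ∃ μ : Fin N → ℝ, (∑ i, |μ i| ^ q) ^ (1/q) = 1 ∧
      ∀ x : Fin N → ℝ, h x = -∑ i, μ i * x i :=
  lp_horofunction_form_general p q hp hpq N h y hy hlim
end

section
/- Let 1 < p < ∞ and q with 1/p + 1/q = 1, let N ≥ 1, 𝒩 = {1,...,N}, and let μ ∈ ℝ^𝒩 with ‖μ‖_q = 1. Define h_μ(x) = −Σ_{i∈𝒩} μ_i x_i. Then there exists a sequence (y^n) in ℝ^𝒩 with ‖y^n‖_p → ∞ such that ‖x − y^n‖_p − ‖y^n‖_p → h_μ(x) for every x ∈ ℝ^𝒩, and moreover there is no z ∈ ℝ^𝒩 with h_μ(x) = ‖x − z‖_p − ‖z‖_p for all x ∈ ℝ^𝒩. -/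
/-!
The dual vector `v i = |μ i| ^ (q - 2) * μ i` is a unit vector of `ℓᵖ` with
`|v i| ^ (p - 2) * v i = μ i`, i.e. `μ` is the gradient of the `ℓᵖ` norm at `v`. Along the ray
`y = t • v`, homogeneity gives `‖x - t v‖_p - ‖t v‖_p = t (‖v - x / t‖_p - 1)`, a difference
quotient of the norm at `v`, which tends to the directional derivative `-∑ μ i * x i`.
This limit is not of the form `x ↦ ‖x - z‖_p - ‖z‖_p`: such a function takes the same value at
`z + e_i` and `z - e_i`, which would force every `μ i` to vanish, contradicting `‖μ‖_q = 1`.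
-/

open Filter Topology

lemma HasDerivAt.tendsto_mul_sub_inv {F : ℝ → ℝ} {F' : ℝ} (h : HasDerivAt F F' 0) :
    Tendsto (fun t => t * (F t⁻¹ - F 0)) atTop (𝓝 F') := by
  have := h.tendsto_slope_zero_right.comp tendsto_inv_atTop_nhdsGT_zero
  simpa only [Function.comp_def, inv_inv, zero_add, smul_eq_mul] using this

noncomputable def pNorm {ι : Type*} [Fintype ι] (p : ℝ) (x : ι → ℝ) : ℝ :=
  (∑ i, |x i| ^ p) ^ (1 / p)

section pNorm

variable {ι : Type*} [Fintype ι] {p : ℝ}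

lemma pNorm_neg (x : ι → ℝ) : pNorm p (-x) = pNorm p x := by
  simp [pNorm]

lemma pNorm_smul_of_nonneg (hp : p ≠ 0) {c : ℝ} (hc : 0 ≤ c) (x : ι → ℝ) :
    pNorm p (c • x) = c * pNorm p x := by
  have hsum : ∑ i, |(c • x) i| ^ p = c ^ p * ∑ i, |x i| ^ p := by
    simp only [Pi.smul_apply, smul_eq_mul, abs_mul, abs_of_nonneg hc,
      Real.mul_rpow hc (abs_nonneg _), Finset.mul_sum]
  rw [pNorm, hsum, Real.mul_rpow (by positivity) (by positivity), ← Real.rpow_mul hc,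
    mul_one_div_cancel hp, Real.rpow_one, pNorm]

lemma pNorm_eq_one_iff (hp : p ≠ 0) (x : ι → ℝ) : pNorm p x = 1 ↔ ∑ i, |x i| ^ p = 1 := by
  rw [pNorm, one_div, Real.rpow_inv_eq (by positivity) zero_le_one hp, Real.one_rpow]

lemma pNorm_zero (hp : p ≠ 0) : pNorm p (0 : ι → ℝ) = 0 := by
  simp [pNorm, Real.zero_rpow hp, Real.zero_rpow (inv_ne_zero hp)]

lemma pNorm_single [DecidableEq ι] (hp : p ≠ 0) (i : ι) : pNorm p (Pi.single i 1) = 1 := by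
  rw [pNorm_eq_one_iff hp, Finset.sum_eq_single i] <;> simp_all [Real.zero_rpow hp]

lemma hasDerivAt_sum_abs_rpow_add_smul (hp : 1 < p) (v x : ι → ℝ) :
    HasDerivAt (fun s : ℝ => ∑ i, |(v + s • x) i| ^ p)
      (p * ∑ i, |v i| ^ (p - 2) * v i * x i) 0 := by
  rw [Finset.mul_sum]
  refine HasDerivAt.fun_sum fun i _ => ?_
  have hline : HasDerivAt (fun s : ℝ => v i + s * x i) (x i) 0 := by
    simpa using ((hasDerivAt_id (0 : ℝ)).mul_const (x i)).const_add (v i)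
  have := (hasDerivAt_abs_rpow (v i + 0 * x i) hp).comp 0 hline
  simpa [Function.comp_def, mul_assoc] using this

lemma hasDerivAt_pNorm_add_smul (hp : 1 < p) {v : ι → ℝ} (hv : pNorm p v = 1) (x : ι → ℝ) :
    HasDerivAt (fun s : ℝ => pNorm p (v + s • x)) (∑ i, |v i| ^ (p - 2) * v i * x i) 0 := by
  have hp0 : p ≠ 0 := by positivity
  have hsum : ∑ i, |(v + (0 : ℝ) • x) i| ^ p = 1 := by
    simpa [pNorm_eq_one_iff hp0] using hv
  have hroot : HasDerivAt (fun u : ℝ => u ^ (1 / p)) (1 / p) (∑ i, |(v + (0 : ℝ) • x) i| ^ p) := by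
    rw [hsum]
    simpa using Real.hasDerivAt_rpow_const (x := 1) (p := 1 / p) (Or.inl one_ne_zero)
  have h := hroot.comp 0 (hasDerivAt_sum_abs_rpow_add_smul hp v x)
  rwa [← mul_assoc, one_div_mul_cancel hp0, one_mul] at h

theorem tendsto_pNorm_sub_smul_sub_pNorm_smul (hp : 1 < p) {v : ι → ℝ} (hv : pNorm p v = 1)
    (x : ι → ℝ) :
    Tendsto (fun t : ℝ => pNorm p (x - t • v) - pNorm p (t • v)) atTop
      (𝓝 (-∑ i, |v i| ^ (p - 2) * v i * x i)) := by
  have hp0 : p ≠ 0 := by positivity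
  have hderiv := hasDerivAt_pNorm_add_smul hp hv (-x)
  simp only [Pi.neg_apply, mul_neg, Finset.sum_neg_distrib] at hderiv
  refine hderiv.tendsto_mul_sub_inv.congr' ?_
  filter_upwards [eventually_gt_atTop 0] with t ht
  have hray : x - t • v = -(t • (v + t⁻¹ • -x)) := by
    rw [smul_add, smul_inv_smul₀ ht.ne']
    abel
  rw [hray, pNorm_neg, pNorm_smul_of_nonneg hp0 ht.le, pNorm_smul_of_nonneg hp0 ht.le, zero_smul,
    add_zero, hv, mul_one, mul_sub_one]

lemma eq_zero_of_neg_sum_mul_eq_pNorm_sub_sub (hp : p ≠ 0) {μ z : ι → ℝ}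
    (h : ∀ x, -∑ i, μ i * x i = pNorm p (x - z) - pNorm p z) : μ = 0 := by
  classical
  have hunit : ∀ w, pNorm p w = 1 → -(μ ⬝ᵥ z) - μ ⬝ᵥ w = 1 - pNorm p z := by
    intro w hw
    have hzw : -(μ ⬝ᵥ (z + w)) = pNorm p (z + w - z) - pNorm p z := h (z + w)
    rwa [dotProduct_add, add_sub_cancel_left, hw, neg_add] at hzw
  funext i
  have hplus := hunit _ (pNorm_single hp i)
  have hminus := hunit _ ((pNorm_neg _).trans (pNorm_single hp i))
  rw [dotProduct_single_one] at hplus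
  rw [dotProduct_neg, dotProduct_single_one] at hminus
  simp only [Pi.zero_apply]
  linarith

end pNorm

/-- The vector at which `x ↦ ∑ i, μ i * x i` attains the dual norm `‖μ‖_q` on the unit sphere
of `ℓᵖ`. -/
noncomputable def dualVec {ι : Type*} (q : ℝ) (μ : ι → ℝ) : ι → ℝ :=
  fun i => |μ i| ^ (q - 2) * μ i

section dualVec

variable {ι : Type*} {p q : ℝ} (hpq : p.HolderConjugate q) (μ : ι → ℝ)
include hpq

lemma abs_dualVec (i : ι) : |dualVec q μ i| = |μ i| ^ (q - 1) := by
  rcases eq_or_ne (μ i) 0 with h | h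
  · simp [dualVec, h, Real.zero_rpow (sub_ne_zero.mpr hpq.symm.lt.ne')]
  · rw [dualVec, abs_mul, abs_of_nonneg (by positivity), ← Real.rpow_add_one (abs_ne_zero.mpr h)]
    ring_nf

lemma abs_dualVec_rpow (i : ι) : |dualVec q μ i| ^ p = |μ i| ^ q := by
  rw [abs_dualVec hpq, ← Real.rpow_mul (abs_nonneg _), hpq.symm.sub_one_mul_conj]

lemma abs_dualVec_rpow_sub_two_mul (i : ι) : |dualVec q μ i| ^ (p - 2) * dualVec q μ i = μ i := by
  rcases eq_or_ne (μ i) 0 with h | h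
  · simp [dualVec, h]
  · have hμ : 0 < |μ i| := abs_pos.mpr h
    rw [abs_dualVec hpq, ← Real.rpow_mul hμ.le, dualVec, ← mul_assoc, ← Real.rpow_add hμ]
    have hexp : (q - 1) * (p - 2) + (q - 2) = 0 := by linear_combination hpq.mul_eq_add
    rw [hexp, Real.rpow_zero, one_mul]

lemma pNorm_dualVec [Fintype ι] (hμ : pNorm q μ = 1) : pNorm p (dualVec q μ) = 1 := by
  rw [pNorm_eq_one_iff hpq.symm.ne_zero] at hμ
  simpa only [pNorm_eq_one_iff hpq.ne_zero, abs_dualVec_rpow hpq] using hμ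

end dualVec

theorem lp_form_is_horofunction_general (p q : ℝ) (hp : 1 < p) (hpq : 1/p + 1/q = 1)
    (N : ℕ) (μ : Fin N → ℝ) (hμ : (∑ i, |μ i| ^ q) ^ (1/q) = 1) :
    (∃ y : ℕ → Fin N → ℝ,
      Tendsto (fun n => (∑ i, |y n i| ^ p) ^ (1/p)) atTop atTop ∧
      ∀ x : Fin N → ℝ,
        Tendsto (fun n =>
            (∑ i, |x i - y n i| ^ p) ^ (1/p) - (∑ i, |y n i| ^ p) ^ (1/p))
          atTop (𝓝 (-∑ i, μ i * x i))) ∧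
    ¬∃ z : Fin N → ℝ, ∀ x : Fin N → ℝ,
      (-∑ i, μ i * x i)
        = (∑ i, |x i - z i| ^ p) ^ (1/p) - (∑ i, |z i| ^ p) ^ (1/p) := by
  have hconj : p.HolderConjugate q :=
    Real.holderConjugate_iff.mpr ⟨hp, by simpa only [one_div] using hpq⟩
  have hv : pNorm p (dualVec q μ) = 1 := pNorm_dualVec hconj μ hμ
  refine ⟨⟨fun n => (n : ℝ) • dualVec q μ, ?_, fun x => ?_⟩, ?_⟩
  · have hnorm : ∀ n : ℕ, pNorm p ((n : ℝ) • dualVec q μ) = n := fun n => by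
      rw [pNorm_smul_of_nonneg hconj.ne_zero n.cast_nonneg, hv, mul_one]
    exact tendsto_natCast_atTop_atTop.congr fun n => (hnorm n).symm
  · have hray := tendsto_pNorm_sub_smul_sub_pNorm_smul hp hv x
    simp only [abs_dualVec_rpow_sub_two_mul hconj] at hray
    exact hray.comp tendsto_natCast_atTop_atTop
  · rintro ⟨z, hz⟩
    have hμ0 : μ = 0 := eq_zero_of_neg_sum_mul_eq_pNorm_sub_sub hconj.ne_zero hz
    rw [hμ0] at hμ
    exact zero_ne_one ((pNorm_zero hconj.symm.ne_zero).symm.trans hμ)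

/-- every `x ↦ -∑ μ_i x_i` with `‖μ‖_q = 1` is a horofunction of
`ℓᵖ(𝒩, ℝ)`. -/
theorem lp_form_is_horofunction (p q : ℝ) (hp : 1 < p) (hpq : 1/p + 1/q = 1)
    (N : ℕ) (hN : 1 ≤ N) (μ : Fin N → ℝ) (hμ : (∑ i, |μ i| ^ q) ^ (1/q) = 1) :
    (∃ y : ℕ → Fin N → ℝ,
      Tendsto (fun n => (∑ i, |y n i| ^ p) ^ (1/p)) atTop atTop ∧
      ∀ x : Fin N → ℝ,
        Tendsto (fun n =>
            (∑ i, |x i - y n i| ^ p) ^ (1/p) - (∑ i, |y n i| ^ p) ^ (1/p))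
          atTop (𝓝 (-∑ i, μ i * x i))) ∧
    ¬∃ z : Fin N → ℝ, ∀ x : Fin N → ℝ,
      (-∑ i, μ i * x i)
        = (∑ i, |x i - z i| ^ p) ^ (1/p) - (∑ i, |z i| ^ p) ^ (1/p) :=
  lp_form_is_horofunction_general p q hp hpq N μ hμ
end
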